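/- arXiv:2504.01720 — 2 statements merged into one kernel-verified Lean document; each statement's English description precedes it below -/
import Mathlib

section
/- The family of languages accepted by IETWGFAs under initialized even computation equals the family of languages generated by even linear grammars. -/
/-!
Both inclusions are backward simulations. An even computation is a sequence of pair steps
`(b, n), (!b, n)` with one common direction `b`, and a pair step of direction `b` from state `q`
to state `q'` erasing `x` on the left and `y` on the right (`|x| = |y|`) is, read backwards, the
even linear rule `(q', b) → x (q, b) y`. So the initialized even computations of an automaton are
the derivations of a grammar with nonterminals `(q, b)`, whose terminating rules are the
initializing moves. Conversely, an automaton reads the terminal word of the last rule of a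
derivation first and then undoes each rule `A → x B y` by a left move over `x` followed by a
right move over `y`; the grammar being even makes these pairs even.
-/

namespace IETW

/-- An input-erasing two-way general finite automaton (IETWGFA). -/
structure GFA (T : Type) : Type 1 where
  Q : Type
  finQ : Finite Q
  start : Q
  accept : Set Q
  /-- Left rules: `(x, q, p)` represents `x q → p`. -/
  ruleL : Set (List T × Q × Q)
  /-- Right rules: `(q, x, p)` represents `q x → p`. -/
  ruleR : Set (Q × List T × Q)
  finL : ruleL.Finite
  finR : ruleR.Finite

variable {T : Type}

/-- One move, labelled by its direction (`true` = left) and the number of erased symbols. -/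
inductive GFA.Step (M : GFA T) :
    List T × M.Q × List T → Bool × ℕ → List T × M.Q × List T → Prop
  | left {u v x : List T} {q p : M.Q} (h : (x, q, p) ∈ M.ruleL) :
      GFA.Step M (u ++ x, q, v) (true, x.length) (u, p, v)
  | right {u v x : List T} {q p : M.Q} (h : (q, x, p) ∈ M.ruleR) :
      GFA.Step M (u, q, x ++ v) (false, x.length) (u, p, v)

/-- A computation along a list of move labels. -/
inductive GFA.Chain (M : GFA T) :
    List T × M.Q × List T → List (Bool × ℕ) → List T × M.Q × List T → Prop
  | nil (c) : GFA.Chain M c [] c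
  | cons {c c' c'' l ls} (h : GFA.Step M c l c') (h' : GFA.Chain M c' ls c'') :
      GFA.Chain M c (l :: ls) c''

/-- `L(M)`. -/
def GFA.lang (M : GFA T) : Set (List T) :=
  {w | ∃ x y ls f, w = x ++ y ∧ f ∈ M.accept ∧ M.Chain (x, M.start, y) ls ([], f, [])}

/-- The moves strictly alternate between left and right. -/
def Alternating (ls : List (Bool × ℕ)) : Prop :=
  ls.Chain' (fun a b => a.1 ≠ b.1)

/-- An even computation: alternating, of even length, and each odd-indexed move reads
the same number of symbols as the following move. -/
def EvenTrace (ls : List (Bool × ℕ)) : Prop :=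
  ls.length % 2 = 0 ∧ Alternating ls ∧
    ∀ i, 2 * i + 1 < ls.length →
      (ls.getD (2 * i) (true, 0)).2 = (ls.getD (2 * i + 1) (true, 0)).2

/-- An initialized even computation: one move followed by an even computation. -/
def InitEvenTrace (ls : List (Bool × ℕ)) : Prop :=
  ∃ l ls', ls = l :: ls' ∧ EvenTrace ls'

/-- `L(M)_alt`. -/
def GFA.langAlt (M : GFA T) : Set (List T) :=
  {w | ∃ x y ls f, w = x ++ y ∧ f ∈ M.accept ∧ Alternating ls ∧
    M.Chain (x, M.start, y) ls ([], f, [])}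

/-- `L(M)_even`. -/
def GFA.langEven (M : GFA T) : Set (List T) :=
  {w | ∃ x y ls f, w = x ++ y ∧ f ∈ M.accept ∧ EvenTrace ls ∧
    M.Chain (x, M.start, y) ls ([], f, [])}

/-- `L(M)_init-even`. -/
def GFA.langInitEven (M : GFA T) : Set (List T) :=
  {w | ∃ x y ls f, w = x ++ y ∧ f ∈ M.accept ∧ InitEvenTrace ls ∧
    M.Chain (x, M.start, y) ls ([], f, [])}

/-- All rules read at most one symbol (IETWSFA). -/
def GFA.Simple (M : GFA T) : Prop :=
  (∀ r ∈ M.ruleL, r.1.length ≤ 1) ∧ (∀ r ∈ M.ruleR, r.2.1.length ≤ 1)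

/-- No ε-rules: every rule reads at least one symbol. -/
def GFA.EpsFree (M : GFA T) : Prop :=
  (∀ r ∈ M.ruleL, r.1 ≠ ([] : List T)) ∧ (∀ r ∈ M.ruleR, r.2.1 ≠ ([] : List T))

/-- A linear grammar: rules `A → x B y` (encoded `(A, x, some (B, y))`)
or `A → x` (encoded `(A, x, none)`). -/
structure LG (T : Type) : Type 1 where
  N : Type
  finN : Finite N
  start : N
  rules : Set (N × List T × Option (N × List T))
  finR : rules.Finite

/-- One derivation step on sentential forms `u A v`. -/
inductive LG.Der (G : LG T) :
    List T × G.N × List T → List T × G.N × List T → Prop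
  | step {u v x y : List T} {A B : G.N} (h : (A, x, some (B, y)) ∈ G.rules) :
      LG.Der G (u, A, v) (u ++ x, B, y ++ v)

/-- `L(G)`. -/
def LG.lang (G : LG T) : Set (List T) :=
  {w | ∃ u A v x, Relation.ReflTransGen G.Der ([], G.start, []) (u, A, v) ∧
    (A, x, none) ∈ G.rules ∧ w = u ++ x ++ v}

/-- Even linear grammar: `|x| = |y|` in every rule `A → x B y`. -/
def LG.Even (G : LG T) : Prop :=
  ∀ r ∈ G.rules, ∀ B (y : List T), r.2.2 = some (B, y) → r.2.1.length = y.length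

open Relation

lemma exists_eq_map_of_reflTransGen {α β : Type*} {R : α → α → Prop}
    {S : β → β → Prop} {e : α → β} (h : ∀ a d, S (e a) d → ∃ a', d = e a' ∧ R a a')
    {a : α} {d : β} (hd : ReflTransGen S (e a) d) :
    ∃ a', d = e a' ∧ ReflTransGen R a a' := by
  induction hd with
  | refl => exact ⟨a, rfl, .refl⟩
  | tail _ hstep ih =>
    obtain ⟨a', rfl, ha'⟩ := ih
    obtain ⟨a'', rfl, hR⟩ := h a' _ hstep
    exact ⟨a'', rfl, ha'.tail hR⟩

inductive Paired : Bool → List (Bool × ℕ) → Prop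
  | nil (b) : Paired b []
  | cons (b n) {ls} (h : Paired b ls) : Paired b ((b, n) :: (!b, n) :: ls)

lemma alternating_iff_isChain {ls : List (Bool × ℕ)} :
    Alternating ls ↔ ls.IsChain (fun a b => a.1 ≠ b.1) :=
  Iff.rfl

lemma evenTrace_nil : EvenTrace [] :=
  ⟨rfl, List.isChain_nil, fun i hi => absurd hi (by simp)⟩

lemma not_evenTrace_singleton (a : Bool × ℕ) : ¬ EvenTrace [a] := by
  simp [EvenTrace]

lemma evenTrace_cons_cons {a a' : Bool × ℕ} {ls : List (Bool × ℕ)} :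
    EvenTrace (a :: a' :: ls) ↔
      a.1 ≠ a'.1 ∧ a.2 = a'.2 ∧ (∀ p ∈ ls.head?, a'.1 ≠ p.1) ∧ EvenTrace ls := by
  rw [EvenTrace, EvenTrace, alternating_iff_isChain, alternating_iff_isChain,
    List.isChain_cons_cons, List.isChain_cons, List.length_cons, List.length_cons]
  constructor
  · rintro ⟨hlen, ⟨hne, hhead, halt⟩, hpair⟩
    refine ⟨hne, hpair 0 (by omega), hhead, by omega, halt, fun i hi => ?_⟩
    simpa [Nat.mul_succ] using hpair (i + 1) (by omega)
  · rintro ⟨hne, heq, hhead, hlen, halt, hpair⟩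
    refine ⟨by omega, ⟨hne, hhead, halt⟩, fun i hi => ?_⟩
    rcases i with _ | i
    · simpa using heq
    · simpa [Nat.mul_succ] using hpair i (by omega)

lemma Paired.head_fst {b : Bool} {ls : List (Bool × ℕ)} (h : Paired b ls) :
    ∀ p ∈ ls.head?, p.1 = b := by
  cases h <;> simp

lemma Paired.evenTrace {b : Bool} {ls : List (Bool × ℕ)} (h : Paired b ls) : EvenTrace ls := by
  induction h with
  | nil => exact evenTrace_nil
  | cons n h ih =>
    refine evenTrace_cons_cons.2 ⟨by simp, rfl, fun p hp => ?_, ih⟩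
    simp [h.head_fst p hp]

lemma EvenTrace.paired : ∀ {ls : List (Bool × ℕ)}, EvenTrace ls →
    ∀ {b : Bool}, (∀ p ∈ ls.head?, p.1 = b) → Paired b ls
  | [], _, b, _ => .nil b
  | [a], h, _, _ => absurd h (not_evenTrace_singleton a)
  | (b₁, n₁) :: (b₂, n₂) :: ls, h, b, hb => by
    obtain ⟨hne, rfl, hhead, hls⟩ := evenTrace_cons_cons.1 h
    obtain rfl : b₁ = b := hb _ rfl
    obtain rfl : b₂ = !b₁ := by cases b₁ <;> simpa using hne.symm
    exact .cons b₁ n₁ (hls.paired fun p hp => by cases b₁ <;> simpa using (hhead p hp).symm)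

lemma evenTrace_iff_exists_paired {ls : List (Bool × ℕ)} :
    EvenTrace ls ↔ ∃ b, Paired b ls := by
  refine ⟨fun h => ?_, fun ⟨b, h⟩ => h.evenTrace⟩
  cases ls with
  | nil => exact ⟨true, .nil true⟩
  | cons a ls => exact ⟨a.1, h.paired (by simp)⟩

namespace GFA

variable (M : GFA T)

def PairStep (b : Bool) (c d : List T × M.Q × List T) : Prop :=
  ∃ n c', M.Step c (b, n) c' ∧ M.Step c' (!b, n) d

variable {M}

lemma step_true_iff {u v : List T} {q : M.Q} {n : ℕ} {c : List T × M.Q × List T} :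
    M.Step (u, q, v) (true, n) c ↔
      ∃ x u' p, u = u' ++ x ∧ x.length = n ∧ (x, q, p) ∈ M.ruleL ∧ c = (u', p, v) := by
  constructor
  · intro h
    cases h with
    | left h => exact ⟨_, _, _, rfl, rfl, h, rfl⟩
  · rintro ⟨x, u', p, rfl, rfl, h, rfl⟩
    exact .left h

lemma step_false_iff {u v : List T} {q : M.Q} {n : ℕ} {c : List T × M.Q × List T} :
    M.Step (u, q, v) (false, n) c ↔
      ∃ y v' p, v = y ++ v' ∧ y.length = n ∧ (q, y, p) ∈ M.ruleR ∧ c = (u, p, v') := by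
  constructor
  · intro h
    cases h with
    | right h => exact ⟨_, _, _, rfl, rfl, h, rfl⟩
  · rintro ⟨y, v', p, rfl, rfl, h, rfl⟩
    exact .right h

lemma pairStep_true_iff {u v u' v' : List T} {q q' : M.Q} :
    M.PairStep true (u, q, v) (u', q', v') ↔ ∃ x y p, u = u' ++ x ∧ v = y ++ v' ∧
      x.length = y.length ∧ (x, q, p) ∈ M.ruleL ∧ (p, y, q') ∈ M.ruleR := by
  constructor
  · rintro ⟨n, c, h₁, h₂⟩
    obtain ⟨x, u₁, p, rfl, rfl, hx, rfl⟩ := step_true_iff.1 h₁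
    obtain ⟨y, v₁, p', rfl, hy, hy', he⟩ := step_false_iff.1 h₂
    simp only [Prod.mk.injEq] at he
    obtain ⟨rfl, rfl, rfl⟩ := he
    exact ⟨x, y, p, rfl, rfl, hy.symm, hx, hy'⟩
  · rintro ⟨x, y, p, rfl, rfl, hxy, hx, hy⟩
    exact ⟨x.length, _, .left hx, hxy ▸ .right hy⟩

lemma pairStep_false_iff {u v u' v' : List T} {q q' : M.Q} :
    M.PairStep false (u, q, v) (u', q', v') ↔ ∃ x y p, u = u' ++ x ∧ v = y ++ v' ∧
      x.length = y.length ∧ (q, y, p) ∈ M.ruleR ∧ (x, p, q') ∈ M.ruleL := by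
  constructor
  · rintro ⟨n, c, h₁, h₂⟩
    obtain ⟨y, v₁, p, rfl, rfl, hy, rfl⟩ := step_false_iff.1 h₁
    obtain ⟨x, u₁, p', rfl, hx, hx', he⟩ := step_true_iff.1 h₂
    simp only [Prod.mk.injEq] at he
    obtain ⟨rfl, rfl, rfl⟩ := he
    exact ⟨x, y, p, rfl, rfl, hx, hy, hx'⟩
  · rintro ⟨x, y, p, rfl, rfl, hxy, hy, hx⟩
    exact ⟨y.length, _, .right hy, hxy ▸ .left hx⟩

lemma Chain.reflTransGen_pairStep {b : Bool} {ls : List (Bool × ℕ)} (hp : Paired b ls) :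
    ∀ {c d}, M.Chain c ls d → ReflTransGen (M.PairStep b) c d := by
  induction hp with
  | nil => rintro c d ⟨⟩; rfl
  | cons n _ ih =>
    rintro c d (_ | ⟨h₁, _ | ⟨h₂, h⟩⟩)
    exact .head ⟨n, _, h₁, h₂⟩ (ih h)

lemma exists_paired_chain_of_reflTransGen {b : Bool} {c d : List T × M.Q × List T}
    (h : ReflTransGen (M.PairStep b) c d) : ∃ ls, Paired b ls ∧ M.Chain c ls d := by
  induction h using ReflTransGen.head_induction_on with
  | refl => exact ⟨[], .nil b, .nil d⟩
  | head hstep _ ih =>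
    obtain ⟨n, c', h₁, h₂⟩ := hstep
    obtain ⟨ls, hp, hc⟩ := ih
    exact ⟨_, hp.cons b n, .cons h₁ (.cons h₂ hc)⟩

lemma mem_langInitEven_iff {w : List T} :
    w ∈ M.langInitEven ↔ ∃ x y l c b f, w = x ++ y ∧ f ∈ M.accept ∧
      M.Step (x, M.start, y) l c ∧ ReflTransGen (M.PairStep b) c ([], f, []) := by
  constructor
  · rintro ⟨x, y, _, f, rfl, hf, ⟨l, ls, rfl, hev⟩, _ | ⟨hl, hc⟩⟩
    obtain ⟨b, hp⟩ := evenTrace_iff_exists_paired.1 hev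
    exact ⟨x, y, l, _, b, f, rfl, hf, hl, Chain.reflTransGen_pairStep hp hc⟩
  · rintro ⟨x, y, l, c, b, f, rfl, hf, hl, hc⟩
    obtain ⟨ls, hp, hc⟩ := exists_paired_chain_of_reflTransGen hc
    exact ⟨x, y, l :: ls, f, rfl, hf, ⟨l, ls, rfl, hp.evenTrace⟩, .cons hl hc⟩

end GFA

namespace LG

variable (G : LG T)

inductive ToGFARuleL : List T × Option (G.N ⊕ G.rules) × Option (G.N ⊕ G.rules) → Prop
  | mk {A x B y} (h : (A, x, some (B, y)) ∈ G.rules) :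
      ToGFARuleL (x, some (.inl B), some (.inr ⟨_, h⟩))

inductive ToGFARuleR : Option (G.N ⊕ G.rules) × List T × Option (G.N ⊕ G.rules) → Prop
  | pair {A x B y} (h : (A, x, some (B, y)) ∈ G.rules) :
      ToGFARuleR (some (.inr ⟨_, h⟩), y, some (.inl A))
  | term {A x} (h : (A, x, none) ∈ G.rules) : ToGFARuleR (none, x, some (.inl A))

def toGFA : GFA T where
  Q := Option (G.N ⊕ G.rules)
  finQ := have := G.finN; have := G.finR.to_subtype; inferInstance
  start := none
  accept := {some (.inl G.start)}
  ruleL := {t | G.ToGFARuleL t}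
  ruleR := {t | G.ToGFARuleR t}
  finL := by
    have := G.finR.to_subtype
    refine (Set.finite_range fun r : G.rules =>
      (r.1.2.1, some (.inl ((r.1.2.2.map Prod.fst).getD G.start)), some (.inr r))).subset ?_
    rintro _ ⟨h⟩
    exact ⟨⟨_, h⟩, rfl⟩
  finR := by
    have := G.finR.to_subtype
    refine ((Set.finite_range fun r : G.rules =>
      (some (.inr r), (r.1.2.2.map Prod.snd).getD [], some (.inl r.1.1))).union
      (Set.finite_range fun r : G.rules => (none, r.1.2.1, some (.inl r.1.1)))).subset ?_
    rintro _ (⟨h⟩ | ⟨h⟩)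
    exacts [.inl ⟨⟨_, h⟩, rfl⟩, .inr ⟨⟨_, h⟩, rfl⟩]

def toGFAConfig (c : List T × G.N × List T) : List T × G.toGFA.Q × List T :=
  (c.1, some (.inl c.2.1), c.2.2)

variable {G}

lemma toGFA_pairStep_toGFAConfig {b : Bool} {a : List T × G.N × List T}
    {d : List T × G.toGFA.Q × List T} (h : G.toGFA.PairStep b (G.toGFAConfig a) d) :
    ∃ a', d = G.toGFAConfig a' ∧ b = true ∧ G.Der a' a := by
  obtain ⟨u, B, v⟩ := a
  obtain ⟨u', q', v'⟩ := d
  cases b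
  · obtain ⟨_, _, _, _, _, _, ⟨⟩, _⟩ := GFA.pairStep_false_iff.1 h
  · obtain ⟨x, y, p, rfl, rfl, -, ⟨hr⟩, hy⟩ := GFA.pairStep_true_iff.1 h
    cases hy
    exact ⟨_, rfl, rfl, .step hr⟩

lemma toGFA_pairStep_of_der (hE : G.Even) {a a' : List T × G.N × List T} (h : G.Der a a') :
    G.toGFA.PairStep true (G.toGFAConfig a') (G.toGFAConfig a) := by
  obtain @⟨u, v, x, y, A, B, hr⟩ := h
  exact GFA.pairStep_true_iff.2 ⟨x, y, _, rfl, rfl, hE _ hr B y rfl, .mk hr, .pair hr⟩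

lemma toGFA_step_start {u v : List T} {l : Bool × ℕ} {c : List T × G.toGFA.Q × List T}
    (h : G.toGFA.Step (u, G.toGFA.start, v) l c) :
    ∃ x A v', v = x ++ v' ∧ (A, x, none) ∈ G.rules ∧ c = G.toGFAConfig (u, A, v') := by
  obtain ⟨b, n⟩ := l
  cases b
  · obtain ⟨x, v', p, rfl, -, hx, rfl⟩ := GFA.step_false_iff.1 h
    cases hx with
    | term hr => exact ⟨x, _, v', rfl, hr, rfl⟩
  · obtain ⟨_, _, _, _, _, ⟨⟩, _⟩ := GFA.step_true_iff.1 h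

lemma toGFA_langInitEven (hE : G.Even) : G.toGFA.langInitEven = G.lang := by
  ext w
  rw [GFA.mem_langInitEven_iff]
  constructor
  · rintro ⟨u, y, l, c, b, f, rfl, rfl, hl, hc⟩
    obtain ⟨x, A, v, rfl, hr, rfl⟩ := toGFA_step_start hl
    obtain ⟨⟨u', A', v'⟩, heq, hder⟩ := exists_eq_map_of_reflTransGen
      (fun _ _ => toGFA_pairStep_toGFAConfig) hc
    simp only [toGFAConfig, Prod.mk.injEq] at heq
    obtain ⟨rfl, rfl, rfl⟩ := heq
    refine ⟨u, A, v, x, ?_, hr, (List.append_assoc _ _ _).symm⟩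
    exact reflTransGen_swap.1 (ReflTransGen.mono (fun _ _ h => h.2) _ _ hder)
  · rintro ⟨u, A, v, x, hder, hr, rfl⟩
    refine ⟨u, x ++ v, (false, x.length), G.toGFAConfig (u, A, v), true, _,
      List.append_assoc _ _ _, rfl, .right (.term hr), ?_⟩
    exact (reflTransGen_swap.2 hder).lift G.toGFAConfig fun _ _ => toGFA_pairStep_of_der hE

end LG

namespace GFA

variable (M : GFA T)

inductive ToLGRule :
    Option (M.Q × Bool) × List T × Option (Option (M.Q × Bool) × List T) → Prop
  | init {f} (b : Bool) (hf : f ∈ M.accept) : ToLGRule (none, [], some (some (f, b), []))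
  | leftRight {x y q p q'} (hx : (x, q, p) ∈ M.ruleL) (hy : (p, y, q') ∈ M.ruleR)
      (hxy : x.length = y.length) : ToLGRule (some (q', true), x, some (some (q, true), y))
  | rightLeft {x y q p q'} (hy : (q, y, p) ∈ M.ruleR) (hx : (x, p, q') ∈ M.ruleL)
      (hxy : x.length = y.length) : ToLGRule (some (q', false), x, some (some (q, false), y))
  | termLeft {x p} (b : Bool) (h : (x, M.start, p) ∈ M.ruleL) : ToLGRule (some (p, b), x, none)
  | termRight {x p} (b : Bool) (h : (M.start, x, p) ∈ M.ruleR) : ToLGRule (some (p, b), x, none)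

def toLG : LG T where
  N := Option (M.Q × Bool)
  finN := have := M.finQ; inferInstance
  start := none
  rules := {r | M.ToLGRule r}
  finR := by
    have := M.finQ
    let W : Set (List T) := insert [] (Prod.fst '' M.ruleL ∪ (fun r => r.2.1) '' M.ruleR)
    have hW : W.Finite := .insert [] ((M.finL.image _).union (M.finR.image _))
    refine (Set.finite_univ.prod
      (hW.prod (.insert none ((Set.finite_univ.prod hW).image some)))).subset ?_
    rintro _ (_ | _ | _ | _ | _) <;> simp only [W] <;> aesop

def toLGConfig (b : Bool) (c : List T × M.Q × List T) : List T × M.toLG.N × List T :=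
  (c.1, some (c.2.1, b), c.2.2)

variable {M}

lemma toLG_even : M.toLG.Even := by
  rintro _ (_ | ⟨-, -, hxy⟩ | ⟨-, -, hxy⟩ | _ | _) B y ⟨⟩
  exacts [rfl, hxy, hxy]

lemma toLG_der_toLGConfig {b : Bool} {a : List T × M.Q × List T}
    {d : List T × M.toLG.N × List T} (h : M.toLG.Der (M.toLGConfig b a) d) :
    ∃ a', d = M.toLGConfig b a' ∧ M.PairStep b a' a := by
  obtain ⟨u, q', v⟩ := a
  obtain @⟨_, _, x, y, _, _, hr⟩ := h
  rcases hr with _ | ⟨hx, hy, hxy⟩ | ⟨hy, hx, hxy⟩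
  · exact ⟨_, rfl, pairStep_true_iff.2 ⟨x, y, _, rfl, rfl, hxy, hx, hy⟩⟩
  · exact ⟨_, rfl, pairStep_false_iff.2 ⟨x, y, _, rfl, rfl, hxy, hy, hx⟩⟩

lemma toLG_der_of_pairStep {b : Bool} {a a' : List T × M.Q × List T} (h : M.PairStep b a a') :
    M.toLG.Der (M.toLGConfig b a') (M.toLGConfig b a) := by
  obtain ⟨u, q, v⟩ := a
  obtain ⟨u', q', v'⟩ := a'
  cases b
  · obtain ⟨x, y, p, rfl, rfl, hxy, hy, hx⟩ := pairStep_false_iff.1 h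
    exact .step (ToLGRule.rightLeft hy hx hxy)
  · obtain ⟨x, y, p, rfl, rfl, hxy, hx, hy⟩ := pairStep_true_iff.1 h
    exact .step (ToLGRule.leftRight hx hy hxy)

lemma toLG_der_start {c : List T × M.toLG.N × List T} (h : M.toLG.Der ([], M.toLG.start, []) c) :
    ∃ f b, f ∈ M.accept ∧ c = M.toLGConfig b ([], f, []) := by
  obtain @⟨_, _, _, _, _, _, hr⟩ := h
  rcases hr with ⟨b, hf⟩
  exact ⟨_, b, hf, rfl⟩

lemma toLG_lang : M.toLG.lang = M.langInitEven := by
  ext w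
  rw [mem_langInitEven_iff]
  constructor
  · rintro ⟨u, A, v, x, hder, hr, rfl⟩
    rcases hder.cases_head with heq | ⟨c, hc, hder⟩
    · cases heq
      cases hr
    obtain ⟨f, b, hf, rfl⟩ := toLG_der_start hc
    obtain ⟨⟨u', q, v'⟩, heq, hpair⟩ := exists_eq_map_of_reflTransGen
      (fun _ _ => toLG_der_toLGConfig) hder
    simp only [toLGConfig, Prod.mk.injEq] at heq
    obtain ⟨rfl, rfl, rfl⟩ := heq
    rcases hr with _ | _ | _ | ⟨_, hx⟩ | ⟨_, hx⟩
    · exact ⟨u ++ x, v, _, (u, q, v), b, f, rfl, hf, .left hx, reflTransGen_swap.1 hpair⟩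
    · exact ⟨u, x ++ v, _, (u, q, v), b, f, List.append_assoc _ _ _, hf, .right hx,
        reflTransGen_swap.1 hpair⟩
  · rintro ⟨x₀, y₀, ⟨d, n⟩, ⟨u, q, v⟩, b, f, rfl, hf, hl, hpair⟩
    have hder : ReflTransGen M.toLG.Der ([], M.toLG.start, []) (M.toLGConfig b (u, q, v)) :=
      .head (.step (ToLGRule.init b hf))
        ((reflTransGen_swap.2 hpair).lift (M.toLGConfig b) fun _ _ => toLG_der_of_pairStep)
    cases d
    · obtain ⟨x, v', p, rfl, -, hx, he⟩ := step_false_iff.1 hl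
      simp only [Prod.mk.injEq] at he
      obtain ⟨rfl, rfl, rfl⟩ := he
      exact ⟨_, _, _, x, hder, ToLGRule.termRight b hx, (List.append_assoc _ _ _).symm⟩
    · obtain ⟨x, u', p, rfl, -, hx, he⟩ := step_true_iff.1 hl
      simp only [Prod.mk.injEq] at he
      obtain ⟨rfl, rfl, rfl⟩ := he
      exact ⟨_, _, _, x, hder, ToLGRule.termLeft b hx, rfl⟩

end GFA

theorem initeven_family_eq_elg (T : Type) :
    {L : Set (List T) | ∃ M : GFA T, M.langInitEven = L} =
      {L : Set (List T) | ∃ G : LG T, G.Even ∧ G.lang = L} := by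
  ext L
  constructor
  · rintro ⟨M, rfl⟩
    exact ⟨M.toLG, GFA.toLG_even, GFA.toLG_lang⟩
  · rintro ⟨G, hE, rfl⟩
    exact ⟨G.toGFA, LG.toGFA_langInitEven hE⟩

end IETW
end

section
/- The family of languages accepted by IETWGFAs under even computation is strictly contained in the family accepted by IETWGFAs under initialized even computation. -/
namespace IETW

variable {T : Type}

/-!
Prefixing a fresh start state with a single ε-move turns every even computation of `M` into an
initialized even computation of the new automaton, so every `L(M)_even` is an init-even language.
The inclusion is strict for a parity reason: an accepting computation erases the whole input,
and an even computation erases it in pairs of moves of equal size, so `L(M)_even` contains only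
words of even length, whereas one move erasing a single symbol is an initialized even computation.
-/

theorem EvenTrace.of_cons_cons {a b : Bool × ℕ} {ls : List (Bool × ℕ)}
    (h : EvenTrace (a :: b :: ls)) : a.2 = b.2 ∧ EvenTrace ls := by
  obtain ⟨hlen, halt, hpair⟩ := h
  refine ⟨by simpa using hpair 0 (by simp), ?_, halt.tail.tail, fun i hi => ?_⟩
  · simp only [List.length_cons] at hlen ⊢
    omega
  · simpa [List.getD, Nat.mul_add] using hpair (i + 1) (by simp at hi ⊢; omega)

theorem EvenTrace.even_sum : ∀ {ls : List (Bool × ℕ)}, EvenTrace ls → Even (ls.map Prod.snd).sum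
  | [], _ => by simp
  | [_], h => absurd h.1 (by simp)
  | _ :: _ :: ls, h => by
    obtain ⟨hab, hls⟩ := h.of_cons_cons
    simp only [List.map_cons, List.sum_cons, ← add_assoc, hab, ← two_mul]
    exact (even_two_mul _).add hls.even_sum

namespace GFA

variable {M : GFA T}

theorem Chain.length_add_length {c c' : List T × M.Q × List T} {ls : List (Bool × ℕ)}
    (h : M.Chain c ls c') :
    c.1.length + c.2.2.length = (ls.map Prod.snd).sum + c'.1.length + c'.2.2.length := by
  induction h with
  | nil => simp
  | cons hst _ ih =>
    cases hst <;> simp only [List.length_append, List.map_cons, List.sum_cons] at ih ⊢ <;> omega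

theorem even_length_of_mem_langEven {w : List T} (hw : w ∈ M.langEven) : Even w.length := by
  obtain ⟨x, y, ls, f, rfl, -, hls, hc⟩ := hw
  have := hc.length_add_length
  simp only [List.length_nil, add_zero] at this
  rw [List.length_append, this]
  exact hls.even_sum

def addStart (M : GFA T) : GFA T where
  Q := Option M.Q
  finQ := have := M.finQ; inferInstance
  start := none
  accept := some '' M.accept
  ruleL := (fun r => (r.1, some r.2.1, some r.2.2)) '' M.ruleL
  ruleR := (fun r => (some r.1, r.2.1, some r.2.2)) '' M.ruleR ∪ {(none, [], some M.start)}
  finL := M.finL.image _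
  finR := (M.finR.image _).union (Set.finite_singleton _)

theorem Chain.addStart {c c' : List T × M.Q × List T} {ls : List (Bool × ℕ)}
    (h : M.Chain c ls c') :
    M.addStart.Chain (c.1, some c.2.1, c.2.2) ls (c'.1, some c'.2.1, c'.2.2) := by
  induction h with
  | nil => exact .nil _
  | cons hst _ ih =>
    refine .cons ?_ ih
    cases hst with
    | left hr => exact .left ⟨_, hr, rfl⟩
    | right hr => exact .right (.inl ⟨_, hr, rfl⟩)

theorem Step.of_addStart {c c' : List T × M.addStart.Q × List T} {l : Bool × ℕ} {q : M.Q}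
    (h : M.addStart.Step c l c') (hq : c.2.1 = some q) :
    ∃ p, c'.2.1 = some p ∧ M.Step (c.1, q, c.2.2) l (c'.1, p, c'.2.2) := by
  cases h with
  | left hr =>
    obtain ⟨⟨x, q', p⟩, hr, hre⟩ := hr
    cases hre
    cases hq
    exact ⟨p, rfl, .left hr⟩
  | right hr =>
    obtain ⟨⟨q', x, p⟩, hr, hre⟩ | hr := hr
    · cases hre
      cases hq
      exact ⟨p, rfl, .right hr⟩
    · cases hr
      cases hq

theorem Chain.of_addStart {c c' : List T × M.addStart.Q × List T} {ls : List (Bool × ℕ)}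
    (h : M.addStart.Chain c ls c') {q : M.Q} (hq : c.2.1 = some q) :
    ∃ p, c'.2.1 = some p ∧ M.Chain (c.1, q, c.2.2) ls (c'.1, p, c'.2.2) := by
  induction h generalizing q with
  | nil => exact ⟨q, hq, .nil _⟩
  | cons hst _ ih =>
    obtain ⟨p, hp, hst'⟩ := hst.of_addStart hq
    obtain ⟨p', hp', hc'⟩ := ih hp
    exact ⟨p', hp', .cons hst' hc'⟩

theorem Step.addStart_start {x y : List T} {l : Bool × ℕ} {c : List T × M.addStart.Q × List T}
    (h : M.addStart.Step (x, M.addStart.start, y) l c) : c = (x, some M.start, y) := by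
  cases h with
  | left hr =>
    obtain ⟨_, _, hre⟩ := hr
    cases hre
  | right hr =>
    obtain ⟨_, _, hre⟩ | hr := hr
    · cases hre
    · cases hr
      rfl

theorem langInitEven_addStart (M : GFA T) : M.addStart.langInitEven = M.langEven := by
  ext w
  constructor
  · rintro ⟨x, y, _, _, rfl, ⟨f, hf, rfl⟩, ⟨l, ls, rfl, hls⟩, _ | ⟨hst, hc⟩⟩
    cases hst.addStart_start
    obtain ⟨p, hp, hc'⟩ := hc.of_addStart rfl
    cases hp
    exact ⟨x, y, ls, f, rfl, hf, hls, hc'⟩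
  · rintro ⟨x, y, ls, f, rfl, hf, hls, hc⟩
    refine ⟨x, y, (false, 0) :: ls, some f, rfl, ⟨f, hf, rfl⟩, ⟨_, _, rfl, hls⟩, ?_⟩
    exact .cons (.right (x := []) (.inr rfl)) hc.addStart

def eraseOne (a : T) : GFA T where
  Q := Unit
  finQ := inferInstance
  start := ()
  accept := Set.univ
  ruleL := ∅
  ruleR := {((), [a], ())}
  finL := Set.finite_empty
  finR := Set.finite_singleton _

theorem singleton_mem_langInitEven_eraseOne (a : T) : [a] ∈ (eraseOne a).langInitEven :=
  ⟨[], [a], [(false, 1)], (), rfl, trivial, ⟨_, [], rfl, rfl, List.isChain_nil, by simp⟩,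
    .cons (.right (x := [a]) (v := []) rfl) (.nil _)⟩

end GFA

theorem even_family_ssubset_initeven_family (T : Type) [Nonempty T] :
    {L : Set (List T) | ∃ M : GFA T, M.langEven = L} ⊂
      {L : Set (List T) | ∃ M : GFA T, M.langInitEven = L} := by
  refine ⟨fun L ⟨M, hM⟩ => ⟨M.addStart, M.langInitEven_addStart.trans hM⟩, fun hsub => ?_⟩
  obtain ⟨a⟩ := ‹Nonempty T›
  obtain ⟨M, hM⟩ := hsub ⟨GFA.eraseOne a, rfl⟩
  have ha : [a] ∈ M.langEven := hM ▸ GFA.singleton_mem_langInitEven_eraseOne a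
  exact Nat.not_even_one (M.even_length_of_mem_langEven ha)

end IETW
end
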